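/- Fix reals α, β with 0 ≤ α < 1 and β > 1. A sequence x ∈ {0,…,ℓ}^ℕ belongs to Σ if and only if a ⪯ σ^{k−1}(x) ⪯ b for all k ∈ ℕ. -/

import Mathlib

/-!
`Ω` is strictly increasing from `[0,1)` to the lexicographic order: while the digits of two
points agree, `F` stretches their distance by `β`, so they must eventually split, and the first
differing digits are then ordered like the points. Hence `a = Ω 0` is the least element of the
shift-invariant set `Σ`, and `b` is approximated by, but not equal to, digit sequences.

Conversely, let `x` satisfy the bounds. At time `t`, a suffix of `x 0, …, x (t-1)` of some length
`e` is a prefix of `a` and one of length `f` is a prefix of `b`; every `w` with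
`σ^e a ⪯ Ω w ≺ σ^f b` is then `F^t z` for some `z` whose digits begin with
`x 0, …, x (t-1)`, since the inverse branch `w ↦ (x_t - α + w)/β` preserves this window
condition. The window is nonempty unless `σ^e a = σ^f b`, in which case a tail of `x` equals
`b`, and one restarts at the time where that tail begins.
-/

noncomputable section

namespace IntermediateBeta

/-- The intermediate beta transformation `x ↦ βx + α mod 1`. -/
def F (α β : ℝ) (x : ℝ) : ℝ := Int.fract (β * x + α)

/-- The digit sequence of a point: `Om α β x n` is the index `i` with `F^[n] x ∈ J_i`.
For `y ∈ [0,1)` we have `y ∈ J_i ↔ ⌊β y + α⌋ = i`. -/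
def Om (α β : ℝ) (x : ℝ) : ℕ → ℕ := fun n => (⌊β * ((F α β)^[n] x) + α⌋).toNat

/-- `ℓ = ⌈α + β⌉ - 1`. -/
def ell (α β : ℝ) : ℕ := ⌈α + β⌉₊ - 1

/-- The subshift `Σ`: closure (in the product topology) of the set of digit sequences
of points of `[0,1)`. -/
def Sig (α β : ℝ) : Set (ℕ → ℕ) := closure (Om α β '' Set.Ico (0 : ℝ) 1)

/-- The shift map. -/
def shift (x : ℕ → ℕ) : ℕ → ℕ := fun n => x (n + 1)

/-- Lexicographic order on one-sided sequences. -/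
def lexLe (x y : ℕ → ℕ) : Prop := x = y ∨ ∃ k, (∀ i < k, x i = y i) ∧ x k < y k

/-- The language of a subset `S` of the full shift: the finite words occurring as
initial segments of elements of `S`. -/
def langOf (S : Set (ℕ → ℕ)) (w : List ℕ) : Prop :=
  ∃ x ∈ S, ∀ i : Fin w.length, x i = w.get i

/-- Membership in the language `𝓛` of the subshift `Σ`. -/
def inLang (α β : ℝ) (w : List ℕ) : Prop := langOf (Sig α β) w

/-- The tail segment of `w` of length `k` agrees with the initial segment of `s`
of length `k`. -/
def tailAgrees (s : ℕ → ℕ) (w : List ℕ) (k : ℕ) : Prop :=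
  k ≤ w.length ∧ ∀ i < k, w.getD (w.length - k + i) 0 = s i

/-- `kmax s w` is the length of the longest tail segment of `w` agreeing with an
initial segment of `s` (`k₁(w)` when `s = a`, `k₂(w)` when `s = b`). -/
def kmax (s : ℕ → ℕ) (w : List ℕ) : ℕ := sSup {k | tailAgrees s w k}

/-- `D a b` is the set of lengths `n` such that the initial segment of `b` of
length `n` occurs somewhere in `a`.  Thus `D a b` is the set `𝖣(a)` of the paper
and `D b a` is `𝖣(b)`. -/
def D (a b : ℕ → ℕ) : Set ℕ := {n | ∃ j, ∀ i < n, b i = a (j + i)}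

/-- Gluing of the words `w 0, v 0, w 1, v 1, …, v (n-1), w n`. -/
def glue {n : ℕ} (w : Fin (n + 1) → List ℕ) (v : Fin n → List ℕ) : List ℕ :=
  (List.ofFn fun i : Fin n => w i.castSucc ++ v i).flatten ++ w (Fin.last n)

/-- A collection `G` of words inside the language `lang` has specification: there
is `τ ∈ ℕ` such that any finite list of words of `G` can be glued, with gluing
words from `lang` of length `τ`, into a word of `lang`. -/
def HasSpec (lang G : List ℕ → Prop) : Prop :=
  ∃ τ : ℕ, 1 ≤ τ ∧ ∀ n : ℕ, ∀ w : Fin (n + 1) → List ℕ, (∀ i, G (w i)) →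
    ∃ v : Fin n → List ℕ, (∀ i, (v i).length = τ ∧ lang (v i)) ∧ lang (glue w v)

/-- The initial segment of a sequence, as a finite word. -/
def pre (s : ℕ → ℕ) (n : ℕ) : List ℕ := List.ofFn fun i : Fin n => s i

/-- Lexicographic order for finite words (of equal length). -/
def wordLe (u v : List ℕ) : Prop :=
  u = v ∨ ∃ k, (∀ i < k, u.getD i 0 = v.getD i 0) ∧ u.getD k 0 < v.getD k 0

/-- Concatenation of a finite word with an infinite sequence. -/
def wcat (w : List ℕ) (x : ℕ → ℕ) : ℕ → ℕ := fun n =>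
  if h : n < w.length then w.get ⟨n, h⟩ else x (n - w.length)

open Set Filter Topology PiNat

lemma shift_iterate_apply (k : ℕ) (x : ℕ → ℕ) (n : ℕ) : shift^[k] x n = x (k + n) := by
  induction k generalizing x with
  | zero => simp
  | succ k ih => rw [Function.iterate_succ_apply, ih, shift, Nat.add_right_comm, Nat.add_assoc]

lemma continuous_shift : Continuous shift :=
  continuous_pi fun n => continuous_apply (n + 1)

lemma lexLe_iff_toLex_le {u v : ℕ → ℕ} : lexLe u v ↔ toLex u ≤ toLex v := by
  rw [le_iff_eq_or_lt, toLex_inj]; rfl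

lemma toLex_lt_iff {u v : ℕ → ℕ} :
    toLex u < toLex v ↔ ∃ k, (∀ i < k, u i = v i) ∧ u k < v k :=
  Iff.rfl

lemma toLex_lt_of_head_lt {u v : ℕ → ℕ} (h : u 0 < v 0) : toLex u < toLex v :=
  ⟨0, fun _ hi => absurd hi (Nat.not_lt_zero _), h⟩

lemma head_le_of_toLex_le {u v : ℕ → ℕ} (h : toLex u ≤ toLex v) : u 0 ≤ v 0 :=
  not_lt.1 fun h' => (toLex_lt_of_head_lt h').not_ge h

lemma toLex_shift_iterate_lt_iff {u v : ℕ → ℕ} {n : ℕ} (h : u ∈ cylinder v n) :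
    toLex (shift^[n] u) < toLex (shift^[n] v) ↔ toLex u < toLex v := by
  simp only [toLex_lt_iff, shift_iterate_apply]
  constructor
  · rintro ⟨k, hk, hlt⟩
    refine ⟨n + k, fun i hi => ?_, hlt⟩
    rcases lt_or_ge i n with hin | hin
    · exact h i hin
    · simpa [Nat.add_sub_cancel' hin] using hk (i - n) (by omega)
  · rintro ⟨k, hk, hlt⟩
    have hnk : n ≤ k := not_lt.1 fun hkn => hlt.ne (h k hkn)
    refine ⟨k - n, fun i hi => hk _ (by omega), ?_⟩
    simpa [Nat.add_sub_cancel' hnk] using hlt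

lemma toLex_shift_iterate_le_iff {u v : ℕ → ℕ} {n : ℕ} (h : u ∈ cylinder v n) :
    toLex (shift^[n] u) ≤ toLex (shift^[n] v) ↔ toLex u ≤ toLex v := by
  rw [← not_lt, ← not_lt]
  exact not_congr (toLex_shift_iterate_lt_iff ((mem_cylinder_comm v u n).1 h))

lemma toLex_le_of_head_le {u v : ℕ → ℕ} (h₀ : u 0 ≤ v 0)
    (h : u 0 = v 0 → toLex (shift u) ≤ toLex (shift v)) : toLex u ≤ toLex v := by
  rcases h₀.lt_or_eq with hlt | heq
  · exact (toLex_lt_of_head_lt hlt).le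
  · exact (toLex_shift_iterate_le_iff (n := 1) (by simpa [mem_cylinder_iff] using heq)).1 (h heq)

lemma toLex_lt_of_head_le {u v : ℕ → ℕ} (h₀ : u 0 ≤ v 0)
    (h : u 0 = v 0 → toLex (shift u) < toLex (shift v)) : toLex u < toLex v := by
  rcases h₀.lt_or_eq with hlt | heq
  · exact toLex_lt_of_head_lt hlt
  · exact (toLex_shift_iterate_lt_iff (n := 1) (by simpa [mem_cylinder_iff] using heq)).1 (h heq)

lemma eventually_mem_cylinder (v : ℕ → ℕ) (n : ℕ) : ∀ᶠ v' in 𝓝 v, v' ∈ cylinder v n :=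
  (isOpen_cylinder _ v n).mem_nhds (self_mem_cylinder v n)

lemma eventually_toLex_lt {u v : ℕ → ℕ} (h : toLex u < toLex v) :
    ∀ᶠ u' in 𝓝 u, toLex u' < toLex v := by
  obtain ⟨k, hk, hlt⟩ := h
  filter_upwards [eventually_mem_cylinder u (k + 1)] with u' hu'
  exact ⟨k, fun i hi => (hu' i (by omega)).trans (hk i hi),
    by simpa only [Pi.toLex_apply, hu' k (by omega)] using hlt⟩

lemma eventually_lt_toLex {u v : ℕ → ℕ} (h : toLex u < toLex v) :
    ∀ᶠ v' in 𝓝 v, toLex u < toLex v' := by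
  obtain ⟨k, hk, hlt⟩ := h
  filter_upwards [eventually_mem_cylinder v (k + 1)] with v' hv'
  exact ⟨k, fun i hi => (hk i hi).trans (hv' i (by omega)).symm,
    by simpa only [Pi.toLex_apply, hv' k (by omega)] using hlt⟩

lemma eq_of_mem_cylinder_of_shift_iterate_eq {u v : ℕ → ℕ} {n : ℕ} (h : u ∈ cylinder v n)
    (h' : shift^[n] u = shift^[n] v) : u = v := by
  funext i
  rcases lt_or_ge i n with hin | hin
  · exact h i hin
  · simpa only [shift_iterate_apply, Nat.add_sub_cancel' hin] using congrFun h' (i - n)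

variable {α β : ℝ}

lemma F_mem_Ico (y : ℝ) : F α β y ∈ Ico (0 : ℝ) 1 :=
  ⟨Int.fract_nonneg _, Int.fract_lt_one _⟩

lemma iterate_F_mem_Ico {y : ℝ} (hy : y ∈ Ico (0 : ℝ) 1) : ∀ n, (F α β)^[n] y ∈ Ico (0 : ℝ) 1
  | 0 => hy
  | n + 1 => by rw [Function.iterate_succ_apply']; exact F_mem_Ico _

lemma shift_Om (y : ℝ) : shift (Om α β y) = Om α β (F α β y) := rfl

lemma shift_iterate_Om (y : ℝ) (k : ℕ) : shift^[k] (Om α β y) = Om α β ((F α β)^[k] y) := by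
  induction k generalizing y with
  | zero => rfl
  | succ k ih => rw [Function.iterate_succ_apply, shift_Om, ih, ← Function.iterate_succ_apply]

lemma F_eq_sub_Om_zero (hα0 : 0 ≤ α) (hβ : 0 ≤ β) {y : ℝ} (hy : 0 ≤ y) :
    F α β y = β * y + α - Om α β y 0 := by
  have hfloor : ((Om α β y 0 : ℕ) : ℤ) = ⌊β * y + α⌋ :=
    Int.toNat_of_nonneg (Int.floor_nonneg.2 (by positivity))
  rw [F, Int.fract, ← hfloor, Int.cast_natCast]

lemma Om_zero_mono (hβ : 0 ≤ β) {y y' : ℝ} (h : y ≤ y') : Om α β y 0 ≤ Om α β y' 0 :=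
  Int.toNat_le_toNat (Int.floor_mono (by simp only [Function.iterate_zero_apply]; gcongr))

lemma iterate_F_sub_iterate_F (hα0 : 0 ≤ α) (hβ : 0 ≤ β) {y y' : ℝ} (hy : y ∈ Ico (0 : ℝ) 1)
    (hy' : y' ∈ Ico (0 : ℝ) 1) {n : ℕ} (h : Om α β y ∈ cylinder (Om α β y') n) :
    (F α β)^[n] y' - (F α β)^[n] y = β ^ n * (y' - y) := by
  induction n with
  | zero => simp
  | succ n ih =>
    have hdig : Om α β ((F α β)^[n] y) 0 = Om α β ((F α β)^[n] y') 0 := h n n.lt_succ_self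
    rw [Function.iterate_succ_apply', Function.iterate_succ_apply',
      F_eq_sub_Om_zero hα0 hβ (iterate_F_mem_Ico hy n).1,
      F_eq_sub_Om_zero hα0 hβ (iterate_F_mem_Ico hy' n).1, hdig, pow_succ]
    linear_combination β * ih (cylinder_anti _ n.le_succ h)

theorem strictMonoOn_Om (hα0 : 0 ≤ α) (hβ : 1 < β) :
    StrictMonoOn (fun y => toLex (Om α β y)) (Ico (0 : ℝ) 1) := by
  intro y hy y' hy' hlt
  by_contra hle
  rcases (not_lt.1 hle).lt_or_eq with hlex | heq
  · obtain ⟨k, hk, hdig⟩ := toLex_lt_iff.1 hlex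
    have hsub := iterate_F_sub_iterate_F hα0 (by linarith) hy hy' (n := k)
      fun i hi => (hk i hi).symm
    have hle : (F α β)^[k] y ≤ (F α β)^[k] y' := by
      nlinarith [pow_pos (by linarith : (0 : ℝ) < β) k]
    exact hdig.not_ge (Om_zero_mono (by linarith) hle)
  · obtain ⟨n, hn⟩ := pow_unbounded_of_one_lt (y' - y)⁻¹ hβ
    have hsub := iterate_F_sub_iterate_F hα0 (by linarith) hy hy' (n := n)
      fun i _ => (congrFun (toLex_inj.1 heq) i).symm
    have hpos : 0 < y' - y := sub_pos.2 hlt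
    have : 1 < β ^ n * (y' - y) := by rwa [inv_lt_iff_one_lt_mul₀ hpos] at hn
    linarith [(iterate_F_mem_Ico (α := α) (β := β) hy n).1,
      (iterate_F_mem_Ico (α := α) (β := β) hy' n).2]

lemma mapsTo_shift_Sig : MapsTo shift (Sig α β) (Sig α β) :=
  MapsTo.closure (fun _ ⟨y, _, hy⟩ => ⟨F α β y, F_mem_Ico y, hy ▸ rfl⟩) continuous_shift

lemma shift_iterate_mem_Sig {v : ℕ → ℕ} (hv : v ∈ Sig α β) (k : ℕ) : shift^[k] v ∈ Sig α β :=
  mapsTo_shift_Sig.iterate k hv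

lemma exists_Om_of_eventually {v : ℕ → ℕ} (hv : v ∈ Sig α β) {p : (ℕ → ℕ) → Prop}
    (hp : ∀ᶠ v' in 𝓝 v, p v') : ∃ y ∈ Ico (0 : ℝ) 1, p (Om α β y) := by
  obtain ⟨_, ⟨y, hy, rfl⟩, hpy⟩ := ((mem_closure_iff_frequently.1 hv).and_eventually hp).exists
  exact ⟨y, hy, hpy⟩

lemma mem_Sig_of_forall_cylinder {x : ℕ → ℕ}
    (h : ∀ n, ∃ y ∈ Ico (0 : ℝ) 1, Om α β y ∈ cylinder x n) : x ∈ Sig α β := by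
  rw [Sig, (isTopologicalBasis_cylinders _).mem_closure_iff]
  rintro _ ⟨v, n, rfl⟩ hx
  obtain ⟨y, hy, hyx⟩ := h n
  rw [← mem_cylinder_iff_eq.1 hx]
  exact ⟨Om α β y, hyx, y, hy, rfl⟩

lemma toLex_Om_zero_le (hα0 : 0 ≤ α) (hβ : 1 < β) {v : ℕ → ℕ} (hv : v ∈ Sig α β) :
    toLex (Om α β 0) ≤ toLex v := by
  by_contra! h
  obtain ⟨y, hy, hlt⟩ := exists_Om_of_eventually hv (eventually_toLex_lt h)
  exact hlt.not_ge (((strictMonoOn_Om hα0 hβ).le_iff_le ⟨le_rfl, one_pos⟩ hy).2 hy.1)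

lemma toLex_Om_lt_of_forall_le (hα0 : 0 ≤ α) (hβ : 1 < β) {b : ℕ → ℕ}
    (hbsup : ∀ v ∈ Sig α β, toLex v ≤ toLex b) {y : ℝ} (hy : y ∈ Ico (0 : ℝ) 1) :
    toLex (Om α β y) < toLex b := by
  have hy' : (y + 1) / 2 ∈ Ico (0 : ℝ) 1 := ⟨by linarith [hy.1], by linarith [hy.2]⟩
  exact (strictMonoOn_Om hα0 hβ hy hy' (by linarith [hy.2])).trans_le
    (hbsup _ (subset_closure ⟨_, hy', rfl⟩))

lemma head_lt_of_mem_Sig (hα0 : 0 ≤ α) (hβ : 0 < β) {v : ℕ → ℕ} (hv : v ∈ Sig α β) :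
    (v 0 : ℝ) < α + β := by
  obtain ⟨y, hy, hyv⟩ := exists_Om_of_eventually hv (eventually_mem_cylinder v 1)
  have hF := (F_mem_Ico (α := α) (β := β) y).1
  rw [F_eq_sub_Om_zero hα0 hβ.le hy.1, hyv 0 one_pos] at hF
  nlinarith [hy.2]

lemma head_sub_add_lt (hα0 : 0 ≤ α) (hβ : 1 < β) {v : ℕ → ℕ} (hv : v ∈ Sig α β) {w : ℝ}
    (hw : w ∈ Ico (0 : ℝ) 1) (h : toLex (Om α β w) < toLex (shift v)) :
    (v 0 : ℝ) - α + w < β := by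
  obtain ⟨y, hy, hyv, hlt⟩ := exists_Om_of_eventually hv
    ((eventually_mem_cylinder v 1).and
      (continuous_shift.continuousAt.eventually (eventually_lt_toLex h)))
  have hwF : w < F α β y := ((strictMonoOn_Om hα0 hβ).lt_iff_lt hw (F_mem_Ico y)).1 hlt
  rw [F_eq_sub_Om_zero hα0 (by linarith) hy.1, hyv 0 one_pos] at hwF
  nlinarith [hy.2]

lemma le_Om_zero_sub_add (hα0 : 0 ≤ α) (hβ : 1 < β) {y w : ℝ} (hy : y ∈ Ico (0 : ℝ) 1)
    (hw : w ∈ Ico (0 : ℝ) 1) (h : toLex (Om α β (F α β y)) ≤ toLex (Om α β w)) :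
    0 ≤ (Om α β y 0 : ℝ) - α + w := by
  have hFw : F α β y ≤ w := ((strictMonoOn_Om hα0 hβ).le_iff_le (F_mem_Ico y) hw).1 h
  rw [F_eq_sub_Om_zero hα0 (by linarith) hy.1] at hFw
  nlinarith [hy.1]

lemma Om_zero_eq_and_F_eq {c : ℕ} {y w : ℝ} (hw : w ∈ Ico (0 : ℝ) 1) (h : β * y + α = c + w) :
    Om α β y 0 = c ∧ F α β y = w := by
  have hfloor : ⌊β * y + α⌋ = c := by
    rw [h, Int.floor_natCast_add, Int.floor_eq_zero_iff.2 hw, add_zero]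
  refine ⟨by simp [Om, hfloor], ?_⟩
  rw [F, Int.fract, hfloor, h]
  push_cast
  ring

/-- The witness is the inverse branch `y = (c - α + w) / β` of `F`. -/
lemma exists_F_preimage (hα0 : 0 ≤ α) (hα1 : α < 1) (hβ : 1 < β) {y₀ : ℝ}
    (hy₀ : y₀ ∈ Ico (0 : ℝ) 1) {v : ℕ → ℕ} (hv : v ∈ Sig α β) {c : ℕ}
    (hc₀ : Om α β y₀ 0 ≤ c) (hc₁ : c ≤ v 0) {w : ℝ} (hw : w ∈ Ico (0 : ℝ) 1)
    (hlo : c = Om α β y₀ 0 → toLex (Om α β (F α β y₀)) ≤ toLex (Om α β w))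
    (hhi : c = v 0 → toLex (Om α β w) < toLex (shift v)) :
    ∃ y ∈ Ico (0 : ℝ) 1, Om α β y 0 = c ∧ F α β y = w ∧
      toLex (Om α β y₀) ≤ toLex (Om α β y) ∧ toLex (Om α β y) < toLex v := by
  have hβ0 : 0 < β := by linarith
  have hlow : 0 ≤ (c : ℝ) - α + w := by
    rcases hc₀.lt_or_eq with hlt | heq
    · have : (1 : ℝ) ≤ c := by exact_mod_cast Nat.one_le_of_lt hlt
      linarith [hw.1]
    · simpa [heq] using le_Om_zero_sub_add hα0 hβ hy₀ hw (hlo heq.symm)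
  have hhigh : (c : ℝ) - α + w < β := by
    rcases hc₁.lt_or_eq with hlt | heq
    · have : (c : ℝ) + 1 ≤ v 0 := by exact_mod_cast hlt
      linarith [head_lt_of_mem_Sig hα0 hβ0 hv, hw.2]
    · simpa [heq] using head_sub_add_lt hα0 hβ hv hw (hhi heq)
  obtain ⟨hy0, hFy⟩ := Om_zero_eq_and_F_eq (α := α) (β := β) (y := ((c : ℝ) - α + w) / β) hw
    (by field_simp; ring)
  refine ⟨_, ⟨div_nonneg hlow hβ0.le, (div_lt_one hβ0).2 hhigh⟩, hy0, hFy, ?_, ?_⟩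
  · refine toLex_le_of_head_le (hc₀.trans_eq hy0.symm) fun h => ?_
    rw [shift_Om, shift_Om, hFy]
    exact hlo (hy0.symm.trans h.symm)
  · refine toLex_lt_of_head_le (hy0.trans_le hc₁) fun h => ?_
    rw [shift_Om, hFy]
    exact hhi (hy0.symm.trans h)

/-- The length of a suffix of `x 0, …, x (t-1)` that is a prefix of `c`, computed greedily
(reset to `0` on a mismatch), so not necessarily the longest such suffix. -/
def matchLen (c x : ℕ → ℕ) : ℕ → ℕ
  | 0 => 0
  | t + 1 => if x t = c (matchLen c x t) then matchLen c x t + 1 else 0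

lemma matchLen_le (c x : ℕ → ℕ) : ∀ t, matchLen c x t ≤ t
  | 0 => le_rfl
  | t + 1 => by
    have := matchLen_le c x t
    rw [matchLen]; split <;> omega

lemma shift_iterate_sub_matchLen_mem_cylinder (c x : ℕ → ℕ) (t : ℕ) :
    shift^[t - matchLen c x t] x ∈ cylinder c (matchLen c x t) := by
  induction t with
  | zero => simp [matchLen]
  | succ t ih =>
    have hle := matchLen_le c x t
    intro i hi
    rw [matchLen] at hi ⊢
    split_ifs at hi ⊢ with hmatch
    · rw [shift_iterate_apply]
      rcases (Nat.lt_succ_iff_lt_or_eq.1 hi) with hi | rfl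
      · simpa [shift_iterate_apply, show t + 1 - (matchLen c x t + 1) + i = t - matchLen c x t + i
          by omega] using ih i hi
      · rwa [show t + 1 - (matchLen c x t + 1) + matchLen c x t = t by omega]
    · exact absurd hi (Nat.not_lt_zero _)

lemma shift_iterate_matchLen_succ {c x : ℕ → ℕ} {t : ℕ} (h : x t = c (matchLen c x t)) :
    shift^[matchLen c x (t + 1)] c = shift (shift^[matchLen c x t] c) := by
  rw [matchLen, if_pos h, Function.iterate_succ_apply']

lemma shift_iterate_matchLen_le {c x : ℕ → ℕ} (hc : ∀ k, toLex c ≤ toLex (shift^[k] x))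
    (t : ℕ) : toLex (shift^[matchLen c x t] c) ≤ toLex (shift^[t] x) := by
  have h := (toLex_shift_iterate_le_iff ((mem_cylinder_comm _ _ _).1
    (shift_iterate_sub_matchLen_mem_cylinder c x t))).2 (hc (t - matchLen c x t))
  rwa [← Function.iterate_add_apply, Nat.add_sub_cancel' (matchLen_le c x t)] at h

lemma le_shift_iterate_matchLen {c x : ℕ → ℕ} (hc : ∀ k, toLex (shift^[k] x) ≤ toLex c)
    (t : ℕ) : toLex (shift^[t] x) ≤ toLex (shift^[matchLen c x t] c) := by
  have h := (toLex_shift_iterate_le_iff (shift_iterate_sub_matchLen_mem_cylinder c x t)).2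
    (hc (t - matchLen c x t))
  rwa [← Function.iterate_add_apply, Nat.add_sub_cancel' (matchLen_le c x t)] at h

lemma exists_iterate_F_eq_of_mem_window (hα0 : 0 ≤ α) (hα1 : α < 1) (hβ : 1 < β) {b : ℕ → ℕ}
    (hb : b ∈ Sig α β) {x : ℕ → ℕ} (hL : ∀ k, toLex (Om α β 0) ≤ toLex (shift^[k] x))
    (hU : ∀ k, toLex (shift^[k] x) ≤ toLex b) (t : ℕ) {w : ℝ} (hw : w ∈ Ico (0 : ℝ) 1)
    (hlo : toLex (shift^[matchLen (Om α β 0) x t] (Om α β 0)) ≤ toLex (Om α β w))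
    (hhi : toLex (Om α β w) < toLex (shift^[matchLen b x t] b)) :
    ∃ z ∈ Ico (0 : ℝ) 1, Om α β z ∈ cylinder x t ∧ (F α β)^[t] z = w := by
  induction t generalizing w with
  | zero => exact ⟨w, hw, fun _ hi => absurd hi (Nat.not_lt_zero _), rfl⟩
  | succ t ih =>
    set e := matchLen (Om α β 0) x t
    have hLe : shift^[e] (Om α β 0) = Om α β ((F α β)^[e] 0) := shift_iterate_Om 0 e
    have hxL := shift_iterate_matchLen_le hL t
    have hxU := le_shift_iterate_matchLen hU t
    rw [hLe] at hxL ih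
    have hxt : shift^[t] x 0 = x t := by rw [shift_iterate_apply, add_zero]
    obtain ⟨y, hy, hy0, hFy, hyL, hyU⟩ := exists_F_preimage hα0 hα1 hβ
      (iterate_F_mem_Ico ⟨le_rfl, one_pos⟩ e) (shift_iterate_mem_Sig hb _) (c := x t)
      ((head_le_of_toLex_le hxL).trans_eq hxt) (hxt.symm.trans_le (head_le_of_toLex_le hxU)) hw
      (fun h => by rwa [shift_iterate_matchLen_succ h, hLe] at hlo)
      (fun h => by
        rwa [shift_iterate_matchLen_succ (by rwa [shift_iterate_apply, add_zero] at h)] at hhi)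
    obtain ⟨z, hz, hzx, hFz⟩ := ih hy hyL hyU
    refine ⟨z, hz, fun i hi => ?_, by rw [Function.iterate_succ_apply', hFz, hFy]⟩
    rcases Nat.lt_succ_iff_lt_or_eq.1 hi with hi | rfl
    · exact hzx i hi
    · exact (congrArg (Om α β · 0) hFz).trans hy0

lemma exists_Om_mem_cylinder_add (hα0 : 0 ≤ α) (hα1 : α < 1) (hβ : 1 < β) {b : ℕ → ℕ}
    (hb : b ∈ Sig α β) {x : ℕ → ℕ} (hL : ∀ k, toLex (Om α β 0) ≤ toLex (shift^[k] x))
    (hU : ∀ k, toLex (shift^[k] x) ≤ toLex b) (t n : ℕ) {w : ℝ} (hw : w ∈ Ico (0 : ℝ) 1)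
    (hlo : toLex (shift^[matchLen (Om α β 0) x t] (Om α β 0)) ≤ toLex (Om α β w))
    (hhi : toLex (Om α β w) < toLex (shift^[matchLen b x t] b))
    (hwx : Om α β w ∈ cylinder (shift^[t] x) n) :
    ∃ z ∈ Ico (0 : ℝ) 1, Om α β z ∈ cylinder x (t + n) := by
  obtain ⟨z, hz, hzx, rfl⟩ := exists_iterate_F_eq_of_mem_window hα0 hα1 hβ hb hL hU t hw hlo hhi
  refine ⟨z, hz, fun i hi => ?_⟩
  rcases lt_or_ge i t with hit | hit
  · exact hzx i hit
  · obtain ⟨j, rfl⟩ := Nat.exists_eq_add_of_le hit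
    simpa only [← shift_iterate_Om, shift_iterate_apply] using hwx j (by omega)

/-- If a tail `σ^t x` is `b` itself, the window at time `t` is `[σ^e a, b)`: it is nonempty
because `b` is not realized, and it contains points whose digits follow `b` for as long as
we like because `b` is approximated by realized sequences. -/
lemma exists_Om_mem_cylinder_of_shift_iterate_eq (hα0 : 0 ≤ α) (hα1 : α < 1) (hβ : 1 < β)
    {b : ℕ → ℕ} (hb : b ∈ Sig α β) (hbsup : ∀ v ∈ Sig α β, toLex v ≤ toLex b) {x : ℕ → ℕ}
    (hL : ∀ k, toLex (Om α β 0) ≤ toLex (shift^[k] x)) (hU : ∀ k, toLex (shift^[k] x) ≤ toLex b)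
    {t : ℕ} (hxb : shift^[t] x = b) (n : ℕ) :
    ∃ z ∈ Ico (0 : ℝ) 1, Om α β z ∈ cylinder x (t + n) := by
  have hUb : shift^[matchLen b x t] b = b := toLex_inj.1 <|
    le_antisymm (hbsup _ (shift_iterate_mem_Sig hb _)) (hxb ▸ le_shift_iterate_matchLen hU t)
  have hLb : toLex (shift^[matchLen (Om α β 0) x t] (Om α β 0)) < toLex b := by
    rw [shift_iterate_Om]
    exact toLex_Om_lt_of_forall_le hα0 hβ hbsup (iterate_F_mem_Ico ⟨le_rfl, one_pos⟩ _)
  obtain ⟨w, hw, hwb, hLw⟩ := exists_Om_of_eventually hb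
    ((eventually_mem_cylinder b n).and (eventually_lt_toLex hLb))
  refine exists_Om_mem_cylinder_add hα0 hα1 hβ hb hL hU t n hw hLw.le ?_ (hxb ▸ hwb)
  rw [hUb]
  exact toLex_Om_lt_of_forall_le hα0 hβ hbsup hw

theorem mem_Sig_of_forall_toLex_le (hα0 : 0 ≤ α) (hα1 : α < 1) (hβ : 1 < β) {b : ℕ → ℕ}
    (hb : b ∈ Sig α β) (hbsup : ∀ v ∈ Sig α β, toLex v ≤ toLex b) {x : ℕ → ℕ}
    (hL : ∀ k, toLex (Om α β 0) ≤ toLex (shift^[k] x)) (hU : ∀ k, toLex (shift^[k] x) ≤ toLex b) :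
    x ∈ Sig α β := by
  refine mem_Sig_of_forall_cylinder fun m => ?_
  have hxL := shift_iterate_matchLen_le hL m
  have hxU := le_shift_iterate_matchLen hU m
  have hf := matchLen_le b x m
  rcases (hxL.trans hxU).lt_or_eq with hlt | heq
  · rw [shift_iterate_Om] at hlt
    exact exists_Om_mem_cylinder_add hα0 hα1 hβ hb hL hU m 0
      (iterate_F_mem_Ico ⟨le_rfl, one_pos⟩ _) (by rw [shift_iterate_Om]) hlt (by simp)
  · -- an empty window forces the tail of `x` after the last match with `b` to be `b`
    have hxm : shift^[m] x = shift^[matchLen b x m] b := toLex_inj.1 (le_antisymm hxU (heq ▸ hxL))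
    have hxb : shift^[m - matchLen b x m] x = b :=
      eq_of_mem_cylinder_of_shift_iterate_eq (shift_iterate_sub_matchLen_mem_cylinder b x m)
        (by rwa [← Function.iterate_add_apply, Nat.add_sub_cancel' hf])
    simpa only [Nat.sub_add_cancel hf] using
      exists_Om_mem_cylinder_of_shift_iterate_eq hα0 hα1 hβ hb hbsup hL hU hxb (matchLen b x m)

theorem mem_Sig_iff_lex_general (α β : ℝ) (hα0 : 0 ≤ α) (hα1 : α < 1) (hβ : 1 < β)
    (b : ℕ → ℕ) (hb : b ∈ Sig α β) (hbsup : ∀ y ∈ Sig α β, lexLe y b)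
    (x : ℕ → ℕ) :
    x ∈ Sig α β ↔
      ∀ k : ℕ, lexLe (Om α β 0) (shift^[k] x) ∧ lexLe (shift^[k] x) b := by
  simp only [lexLe_iff_toLex_le] at hbsup ⊢
  refine ⟨fun hx k => ?_, fun h => ?_⟩
  · have hxk := shift_iterate_mem_Sig hx k
    exact ⟨toLex_Om_zero_le hα0 hβ hxk, hbsup _ hxk⟩
  · exact mem_Sig_of_forall_toLex_le hα0 hα1 hβ hb hbsup (fun k => (h k).1) (fun k => (h k).2)

/-- **Lemma (lexicographic description of `Σ`).** For `0 ≤ α < 1` and `β > 1`,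
a sequence `x ∈ {0,…,ℓ}^ℕ` belongs to `Σ` if and only if
`a ⪯ σ^{k-1}(x) ⪯ b` for all `k ∈ ℕ`. -/
theorem mem_Sig_iff_lex (α β : ℝ) (hα0 : 0 ≤ α) (hα1 : α < 1) (hβ : 1 < β)
    (b : ℕ → ℕ) (hb : b ∈ Sig α β) (hbsup : ∀ y ∈ Sig α β, lexLe y b)
    (x : ℕ → ℕ) (hx : ∀ n, x n ≤ ell α β) :
    x ∈ Sig α β ↔
      ∀ k : ℕ, lexLe (Om α β 0) (shift^[k] x) ∧ lexLe (shift^[k] x) b :=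
  mem_Sig_iff_lex_general α β hα0 hα1 hβ b hb hbsup x

end IntermediateBeta
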